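/- arXiv:2505.20359 — 2 statements merged into one kernel-verified Lean document; each statement's English description precedes it below -/
import Mathlib

section
/- Fix a finite nonempty action alphabet A and horizon T ∈ ℕ. A state is a list s of elements of A with length ≤ T, and a policy π assigns to each state s with length < T a probability mass function π(s) on A. Let Φ assign to each probability mass function μ on A and each function f : A → ℝ a real number Φ_μ(f), and assume Φ is monotone (f ≤ g pointwise implies Φ_μ(f) ≤ Φ_μ(g)) and translation invariant (Φ_μ(f + c) = Φ_μ(f) + c for every constant c ∈ ℝ). Given a terminal reward R on length-T lists, define the risk-aware value Ṽ_π(s) by Ṽ_π(s) = R(s) when |s| = T and Ṽ_π(s) = Φ_{π(s)}(a ↦ Ṽ_π(s ++ [a])) when |s| < T, and define the risk-aware advantage Ã_π(s, a) = Ṽ_π(s ++ [a]) − Ṽ_π(s). If π and π′ are two policies such that for every state s with |s| < T one has Φ_{π′(s)}(a ↦ Ã_π(s, a)) ≥ 0, then Ṽ_{π′}(s) ≥ Ṽ_π(s) for every state s; in particular Ṽ_{π′}([]) ≥ Ṽ_π([]), i.e., the risk-aware value of π′ at any initial prompt is at least that of π. -/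
/-!
Backward induction on the number of remaining tokens. Translation invariance turns the
advantage condition into `V s ≤ Φ_{π'(s)} (a ↦ V (s ++ [a]))`, i.e. `V` is a subsolution of the
Bellman equation of `π'`, and monotonicity of `Φ` propagates `V ≤ V'` from the terminal states,
where both equal `R`, back to every shorter prefix.
-/

lemma le_of_nonneg_apply_sub_const {α : Type*} {ρ : (α → ℝ) → ℝ}
    (htrans : ∀ (f : α → ℝ) (c : ℝ), ρ (fun a => f a + c) = ρ f + c)
    {f : α → ℝ} {c : ℝ} (h : 0 ≤ ρ (fun a => f a - c)) : c ≤ ρ f := by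
  simp only [sub_eq_add_neg, htrans] at h
  linarith

lemma le_of_le_bellman {A : Type*} (T : ℕ) {ρ : List A → (A → ℝ) → ℝ}
    (hmono : ∀ s, Monotone (ρ s)) {W V : List A → ℝ}
    (hT : ∀ s : List A, s.length = T → W s ≤ V s)
    (hW : ∀ s : List A, s.length < T → W s ≤ ρ s (fun a => W (s ++ [a])))
    (hV : ∀ s : List A, s.length < T → V s = ρ s (fun a => V (s ++ [a]))) :
    ∀ s : List A, s.length ≤ T → W s ≤ V s := by
  intro s hs
  induction hk : T - s.length generalizing s with
  | zero => exact hT s (by omega)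
  | succ k ih =>
    have hlt : s.length < T := by omega
    calc W s ≤ ρ s (fun a => W (s ++ [a])) := hW s hlt
      _ ≤ ρ s (fun a => V (s ++ [a])) :=
          hmono s fun a => ih (s ++ [a]) (by rw [List.length_append, List.length_singleton]; omega)
            (by rw [List.length_append, List.length_singleton]; omega)
      _ = V s := (hV s hlt).symm

theorem stmt_1_general {A : Type*} (T : ℕ)
    (π' : List A → A → ℝ)
    (Φ : (A → ℝ) → (A → ℝ) → ℝ)
    (hmono : ∀ (μ : A → ℝ) (f g : A → ℝ), (∀ a, f a ≤ g a) → Φ μ f ≤ Φ μ g)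
    (htrans : ∀ (μ : A → ℝ) (f : A → ℝ) (c : ℝ), Φ μ (fun a => f a + c) = Φ μ f + c)
    (R : List A → ℝ) (V V' : List A → ℝ)
    (hVT : ∀ s : List A, s.length = T → V s = R s)
    (hV'T : ∀ s : List A, s.length = T → V' s = R s)
    (hV' : ∀ s : List A, s.length < T → V' s = Φ (π' s) (fun a => V' (s ++ [a])))
    (hadv : ∀ s : List A, s.length < T →
      0 ≤ Φ (π' s) (fun a => V (s ++ [a]) - V s)) :
    (∀ s : List A, s.length ≤ T → V s ≤ V' s) ∧ V [] ≤ V' [] := by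
  have hle : ∀ s : List A, s.length ≤ T → V s ≤ V' s :=
    le_of_le_bellman T (fun s _ _ hfg => hmono (π' s) _ _ hfg)
      (fun s hs => (hVT s hs).trans_le (hV'T s hs).ge)
      (fun s hs => le_of_nonneg_apply_sub_const (htrans (π' s)) (hadv s hs)) hV'
  exact ⟨hle, hle [] (Nat.zero_le T)⟩

/-- Risk-aware policy improvement: in the deterministic token-concatenation MDP, with a
monotone and translation-invariant risk functional `Φ`, if the risk-aggregated advantage of
`π` under the action distribution of `π'` is nonnegative at every nonterminal state, then the
risk-aware value of `π'` dominates that of `π` at every state, in particular at `[]`. -/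
theorem stmt_1 {A : Type*} [Fintype A] [Nonempty A] (T : ℕ)
    (π π' : List A → A → ℝ)
    (hπ : ∀ s : List A, s.length < T → (∀ a, 0 ≤ π s a) ∧ (∑ a, π s a) = 1)
    (hπ' : ∀ s : List A, s.length < T → (∀ a, 0 ≤ π' s a) ∧ (∑ a, π' s a) = 1)
    (Φ : (A → ℝ) → (A → ℝ) → ℝ)
    (hmono : ∀ (μ : A → ℝ) (f g : A → ℝ), (∀ a, f a ≤ g a) → Φ μ f ≤ Φ μ g)
    (htrans : ∀ (μ : A → ℝ) (f : A → ℝ) (c : ℝ), Φ μ (fun a => f a + c) = Φ μ f + c)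
    (R : List A → ℝ) (V V' : List A → ℝ)
    (hVT : ∀ s : List A, s.length = T → V s = R s)
    (hV : ∀ s : List A, s.length < T → V s = Φ (π s) (fun a => V (s ++ [a])))
    (hV'T : ∀ s : List A, s.length = T → V' s = R s)
    (hV' : ∀ s : List A, s.length < T → V' s = Φ (π' s) (fun a => V' (s ++ [a])))
    (hadv : ∀ s : List A, s.length < T →
      0 ≤ Φ (π' s) (fun a => V (s ++ [a]) - V s)) :
    (∀ s : List A, s.length ≤ T → V s ≤ V' s) ∧ V [] ≤ V' [] :=
  stmt_1_general T π' Φ hmono htrans R V V' hVT hV'T hV' hadv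
end

section
/- Let Z be a finite nonempty type, β > 0, c ∈ ℝ, and for i = 1, 2 let T_i ≥ 1, and for each t = 1, …, T_i let p_{i,t}, q_{i,t} : Z → ℝ be strictly positive functions, y_{i,t} ∈ Z, C_{i,t} > 0, and Φ_{i,t} : (Z → ℝ) → ℝ be translation invariant (Φ(f + c·𝟙) = Φ(f) + c) and positively homogeneous (Φ(c·f) = c·Φ(f) for c ≥ 0). Define Q̃_{i,t}(z) = β·log(p_{i,t}(z)/q_{i,t}(z)) + β·log C_{i,t}, Ã_{i,t} = Q̃_{i,t}(y_{i,t}) − Φ_{i,t}(Q̃_{i,t}), and suppose the sentence-level rewards satisfy r_i = c + Σ_{t=1}^{T_i} Ã_{i,t} with the constant c common to both. Then exp(r_1)/(exp(r_1) + exp(r_2)) = σ( u − δ ), where σ(u) = 1/(1 + exp(−u)), u = β·( Σ_{t=1}^{T_1} log(p_{1,t}(y_{1,t})/q_{1,t}(y_{1,t})) − Σ_{t=1}^{T_2} log(p_{2,t}(y_{2,t})/q_{2,t}(y_{2,t})) ), and δ = β·( Σ_{t=1}^{T_1} Φ_{1,t}( z ↦ log(p_{1,t}(z)/q_{1,t}(z))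 ) − Σ_{t=1}^{T_2} Φ_{2,t}( z ↦ log(p_{2,t}(z)/q_{2,t}(z)) ) ). -/
/-! Translation invariance and positive homogeneity let each risk measure `Φ_{i,t}` pull the
factor `β` and the constant `β·log C_{i,t}` out of `Q̃_{i,t}`; that constant then cancels
against the one in `Q̃_{i,t}(y_{i,t})`, so `r₁ − r₂ = u − δ`, the shared `c` dropping out. The
Bradley–Terry probability depends on the rewards only through `r₁ − r₂`. -/

open Finset Real

lemma Real.exp_div_exp_add_exp (a b : ℝ) : exp a / (exp a + exp b) = sigmoid (a - b) := by
  rw [sigmoid_def, exp_neg, exp_sub]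
  field_simp

section RiskMeasure

variable {Z ι : Type*} {β : ℝ}

lemma risk_measure_mul_add (Φ : (Z → ℝ) → ℝ)
    (htrans : ∀ (f : Z → ℝ) (k : ℝ), Φ (fun z => f z + k) = Φ f + k)
    (hhom : ∀ (f : Z → ℝ) (k : ℝ), 0 ≤ k → Φ (fun z => k * f z) = k * Φ f)
    (hβ : 0 ≤ β) (g : Z → ℝ) (k : ℝ) :
    Φ (fun z => β * g z + k) = β * Φ g + k := by
  rw [htrans (fun z => β * g z) k, hhom g β hβ]

lemma sum_advantage_eq (s : Finset ι) (Φ : ι → (Z → ℝ) → ℝ)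
    (htrans : ∀ t (f : Z → ℝ) (k : ℝ), Φ t (fun z => f z + k) = Φ t f + k)
    (hhom : ∀ t (f : Z → ℝ) (k : ℝ), 0 ≤ k → Φ t (fun z => k * f z) = k * Φ t f)
    (hβ : 0 ≤ β) (g : ι → Z → ℝ) (y : ι → Z) (k : ι → ℝ) :
    ∑ t ∈ s, ((β * g t (y t) + k t) - Φ t (fun z => β * g t z + k t))
      = β * ∑ t ∈ s, g t (y t) - β * ∑ t ∈ s, Φ t (g t) := by
  simp only [risk_measure_mul_add (Φ _) (htrans _) (hhom _) hβ, mul_sum, ← sum_sub_distrib]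
  exact sum_congr rfl fun _ _ => by ring

end RiskMeasure

theorem stmt_10_general {Z : Type*}
    (β : ℝ) (hβ : 0 < β) (c : ℝ)
    (T₁ T₂ : ℕ)
    (p₁ q₁ p₂ q₂ : ℕ → Z → ℝ)
    (y₁ y₂ : ℕ → Z) (C₁ C₂ : ℕ → ℝ)
    (Φ₁ Φ₂ : ℕ → (Z → ℝ) → ℝ)
    (htrans₁ : ∀ t (f : Z → ℝ) (k : ℝ), Φ₁ t (fun z => f z + k) = Φ₁ t f + k)
    (hhom₁ : ∀ t (f : Z → ℝ) (k : ℝ), 0 ≤ k → Φ₁ t (fun z => k * f z) = k * Φ₁ t f)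
    (htrans₂ : ∀ t (f : Z → ℝ) (k : ℝ), Φ₂ t (fun z => f z + k) = Φ₂ t f + k)
    (hhom₂ : ∀ t (f : Z → ℝ) (k : ℝ), 0 ≤ k → Φ₂ t (fun z => k * f z) = k * Φ₂ t f)
    (r₁ r₂ : ℝ)
    (hr₁ : r₁ = c + ∑ t ∈ Finset.Icc 1 T₁,
      ((β * Real.log (p₁ t (y₁ t) / q₁ t (y₁ t)) + β * Real.log (C₁ t))
        - Φ₁ t (fun z => β * Real.log (p₁ t z / q₁ t z) + β * Real.log (C₁ t))))
    (hr₂ : r₂ = c + ∑ t ∈ Finset.Icc 1 T₂,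
      ((β * Real.log (p₂ t (y₂ t) / q₂ t (y₂ t)) + β * Real.log (C₂ t))
        - Φ₂ t (fun z => β * Real.log (p₂ t z / q₂ t z) + β * Real.log (C₂ t)))) :
    Real.exp r₁ / (Real.exp r₁ + Real.exp r₂)
      = 1 / (1 + Real.exp (-(
          (β * ((∑ t ∈ Finset.Icc 1 T₁, Real.log (p₁ t (y₁ t) / q₁ t (y₁ t)))
            - ∑ t ∈ Finset.Icc 1 T₂, Real.log (p₂ t (y₂ t) / q₂ t (y₂ t))))
          - (β * ((∑ t ∈ Finset.Icc 1 T₁, Φ₁ t (fun z => Real.log (p₁ t z / q₁ t z)))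
            - ∑ t ∈ Finset.Icc 1 T₂, Φ₂ t (fun z => Real.log (p₂ t z / q₂ t z))))))) := by
  rw [Real.exp_div_exp_add_exp, one_div, ← sigmoid_def, hr₁, hr₂,
    sum_advantage_eq _ Φ₁ htrans₁ hhom₁ hβ.le (fun t z => log (p₁ t z / q₁ t z)),
    sum_advantage_eq _ Φ₂ htrans₂ hhom₂ hβ.le (fun t z => log (p₂ t z / q₂ t z))]
  congr 1
  ring

/-- Theorem 1 of the paper: with token-level risk-aware advantages
`Ã_{i,t} = Q̃_{i,t}(y_{i,t}) − Φ_{i,t}(Q̃_{i,t})`, where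
`Q̃_{i,t}(z) = β·log(p_{i,t}(z)/q_{i,t}(z)) + β·log C_{i,t}` and each `Φ_{i,t}` is
translation invariant and positively homogeneous, and sentence-level rewards
`r_i = c + Σ_{t=1}^{T_i} Ã_{i,t}` with common constant `c`, the Bradley–Terry probability
`exp(r₁)/(exp(r₁)+exp(r₂))` equals `σ(u − δ)` with `u` the β-weighted difference of summed
log-likelihood ratios and `δ` the difference of sequential risk ratios. -/
theorem stmt_10 {Z : Type*} [Fintype Z] [Nonempty Z]
    (β : ℝ) (hβ : 0 < β) (c : ℝ)
    (T₁ T₂ : ℕ) (hT₁ : 1 ≤ T₁) (hT₂ : 1 ≤ T₂)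
    (p₁ q₁ p₂ q₂ : ℕ → Z → ℝ)
    (hp₁ : ∀ t z, 0 < p₁ t z) (hq₁ : ∀ t z, 0 < q₁ t z)
    (hp₂ : ∀ t z, 0 < p₂ t z) (hq₂ : ∀ t z, 0 < q₂ t z)
    (y₁ y₂ : ℕ → Z) (C₁ C₂ : ℕ → ℝ)
    (hC₁ : ∀ t, 0 < C₁ t) (hC₂ : ∀ t, 0 < C₂ t)
    (Φ₁ Φ₂ : ℕ → (Z → ℝ) → ℝ)
    (htrans₁ : ∀ t (f : Z → ℝ) (k : ℝ), Φ₁ t (fun z => f z + k) = Φ₁ t f + k)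
    (hhom₁ : ∀ t (f : Z → ℝ) (k : ℝ), 0 ≤ k → Φ₁ t (fun z => k * f z) = k * Φ₁ t f)
    (htrans₂ : ∀ t (f : Z → ℝ) (k : ℝ), Φ₂ t (fun z => f z + k) = Φ₂ t f + k)
    (hhom₂ : ∀ t (f : Z → ℝ) (k : ℝ), 0 ≤ k → Φ₂ t (fun z => k * f z) = k * Φ₂ t f)
    (r₁ r₂ : ℝ)
    (hr₁ : r₁ = c + ∑ t ∈ Finset.Icc 1 T₁,
      ((β * Real.log (p₁ t (y₁ t) / q₁ t (y₁ t)) + β * Real.log (C₁ t))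
        - Φ₁ t (fun z => β * Real.log (p₁ t z / q₁ t z) + β * Real.log (C₁ t))))
    (hr₂ : r₂ = c + ∑ t ∈ Finset.Icc 1 T₂,
      ((β * Real.log (p₂ t (y₂ t) / q₂ t (y₂ t)) + β * Real.log (C₂ t))
        - Φ₂ t (fun z => β * Real.log (p₂ t z / q₂ t z) + β * Real.log (C₂ t)))) :
    Real.exp r₁ / (Real.exp r₁ + Real.exp r₂)
      = 1 / (1 + Real.exp (-(
          (β * ((∑ t ∈ Finset.Icc 1 T₁, Real.log (p₁ t (y₁ t) / q₁ t (y₁ t)))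
            - ∑ t ∈ Finset.Icc 1 T₂, Real.log (p₂ t (y₂ t) / q₂ t (y₂ t))))
          - (β * ((∑ t ∈ Finset.Icc 1 T₁, Φ₁ t (fun z => Real.log (p₁ t z / q₁ t z)))
            - ∑ t ∈ Finset.Icc 1 T₂, Φ₂ t (fun z => Real.log (p₂ t z / q₂ t z))))))) :=
  stmt_10_general β hβ c T₁ T₂ p₁ q₁ p₂ q₂ y₁ y₂ C₁ C₂ Φ₁ Φ₂ htrans₁ hhom₁ htrans₂ hhom₂ r₁ r₂ hr₁
    hr₂
end
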